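/- Fix 0 < s < K, r ≥ 0, and set κ := ln K − ln s > 0. Let δ > 0 and h : (0,δ) → (0,∞), and suppose there exists u > 0 such that lim_{τ→0⁺} C_BS(τ, s; h(τ), r, K)/τ = u. Then lim_{τ→0⁺} h(τ) √τ = 0. -/

import Mathlib

/-!
In terms of the total volatility `v = σ√τ` and the discount exponent `ρ = rτ` the call price is
`C(v, ρ) = s Φ(d₁) - K e^{-ρ} Φ(d₂)` with `d₁,₂ = (ln(s/K) + ρ)/v ± v/2`. The identity
`s φ(d₁) = K e^{-ρ} φ(d₂)` makes the vega `∂C/∂v` equal to `s φ(d₁) > 0`, so `C` is strictly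
increasing in `v`; out of the money `d₁, d₂ → -∞` as `v → 0⁺`, so `C(·, 0) > 0`.
The hypothesis forces `C_BS = τ · (C_BS / τ) → 0`, while `h(τ)√τ ≥ ε` would give
`C_BS ≥ C(ε, rτ) → C(ε, 0) > 0`.
-/

open MeasureTheory Filter Topology

noncomputable def stdNormalCDF (x : ℝ) : ℝ :=
  ∫ u in Set.Iic x, Real.exp (-u ^ 2 / 2) / Real.sqrt (2 * Real.pi)

/-- Black–Scholes call price with time-to-maturity `τ`, spot `s`, volatility `σ`,
interest rate `r` and strike `K`. -/
noncomputable def BSCall (τ s σ r K : ℝ) : ℝ :=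
  s * stdNormalCDF ((Real.log (s / K) + (r + σ ^ 2 / 2) * τ) / (σ * Real.sqrt τ)) -
    K * Real.exp (-r * τ) *
      stdNormalCDF ((Real.log (s / K) + (r - σ ^ 2 / 2) * τ) / (σ * Real.sqrt τ))

open Real Set

theorem StrictMonoOn.lt_of_tendsto_nhdsGT {α β : Type*} [LinearOrder α] [TopologicalSpace α]
    [OrderTopology α] [DenselyOrdered α] [LinearOrder β] [TopologicalSpace β]
    [OrderClosedTopology β] {f : α → β} {a x : α} {L : β} (hf : StrictMonoOn f (Ioi a))
    (hL : Tendsto f (𝓝[>] a) (𝓝 L)) (hx : a < x) : L < f x := by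
  obtain ⟨y, hay, hyx⟩ := exists_between hx
  have : (𝓝[>] a).NeBot := nhdsGT_neBot_of_exists_gt ⟨x, hx⟩
  have hLy : L ≤ f y := le_of_tendsto hL <| eventually_of_mem (Ioo_mem_nhdsGT hay) fun w hw =>
    ((hf.lt_iff_lt hw.1 hay).2 hw.2).le
  exact hLy.trans_lt (hf hay (hay.trans hyx) hyx)

noncomputable def stdNormalPDF (x : ℝ) : ℝ := exp (-x ^ 2 / 2) / √(2 * π)

lemma stdNormalPDF_pos (x : ℝ) : 0 < stdNormalPDF x := by
  unfold stdNormalPDF; positivity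

lemma continuous_stdNormalPDF : Continuous stdNormalPDF := by
  unfold stdNormalPDF; fun_prop

lemma integrable_stdNormalPDF : Integrable stdNormalPDF := by
  have := (integrable_exp_neg_mul_sq (b := 1 / 2) (by norm_num)).div_const √(2 * π)
  convert this using 2 with x
  unfold stdNormalPDF; ring_nf

lemma stdNormalPDF_add_half (x v : ℝ) :
    stdNormalPDF (x + v / 2) = exp (-(x * v)) * stdNormalPDF (x - v / 2) := by
  unfold stdNormalPDF
  rw [mul_div_assoc', ← exp_add]
  ring_nf

lemma stdNormalCDF_sub_stdNormalCDF (a b : ℝ) :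
    stdNormalCDF b - stdNormalCDF a = ∫ x in a..b, stdNormalPDF x :=
  intervalIntegral.integral_Iic_sub_Iic integrable_stdNormalPDF.integrableOn
    integrable_stdNormalPDF.integrableOn

lemma hasDerivAt_stdNormalCDF (x : ℝ) : HasDerivAt stdNormalCDF (stdNormalPDF x) x := by
  have hΦ : stdNormalCDF = fun y => stdNormalCDF 0 + ∫ t in (0 : ℝ)..y, stdNormalPDF t := by
    ext y; rw [← stdNormalCDF_sub_stdNormalCDF, add_sub_cancel]
  rw [hΦ]
  exact ((continuous_stdNormalPDF.integral_hasStrictDerivAt 0 x).hasDerivAt).const_add _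

@[fun_prop]
lemma continuous_stdNormalCDF : Continuous stdNormalCDF :=
  continuous_iff_continuousAt.2 fun x => (hasDerivAt_stdNormalCDF x).continuousAt

lemma tendsto_stdNormalCDF_atBot : Tendsto stdNormalCDF atBot (𝓝 0) := by
  have hΦ : stdNormalCDF = fun y => stdNormalCDF 0 - ∫ t in y..0, stdNormalPDF t := by
    ext y; rw [← stdNormalCDF_sub_stdNormalCDF, sub_sub_cancel]
  have h := (tendsto_const_nhds (x := stdNormalCDF 0)).sub <|
    intervalIntegral_tendsto_integral_Iic 0 integrable_stdNormalPDF.integrableOn tendsto_id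
  have hΦ₀ : ∫ t in Iic 0, stdNormalPDF t = stdNormalCDF 0 := rfl
  rw [hΦ₀, sub_self] at h
  rwa [hΦ]

noncomputable def bsPrice (s K v ρ : ℝ) : ℝ :=
  s * stdNormalCDF ((log (s / K) + ρ) / v + v / 2) -
    K * exp (-ρ) * stdNormalCDF ((log (s / K) + ρ) / v - v / 2)

/-- Also when `σ√τ = 0`: both sides then divide by zero in the same places. -/
lemma BSCall_eq_bsPrice (τ s σ r K : ℝ) :
    BSCall τ s σ r K = bsPrice s K (σ * √τ) (r * τ) := by
  unfold BSCall bsPrice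
  rcases eq_or_ne (σ * √τ) 0 with hv | hv
  · simp [hv]
  have hτ : 0 < τ := by
    by_contra! hτ
    exact hv (by rw [sqrt_eq_zero'.2 hτ, mul_zero])
  have hσ : σ ≠ 0 := left_ne_zero_of_mul hv
  have hsq : √τ ^ 2 = τ := sq_sqrt hτ.le
  congr 3 <;> field_simp <;> rw [hsq] <;> ring

section Price

variable {s K : ℝ}

lemma mul_stdNormalPDF_add_half (hs : 0 < s) (hK : 0 < K) (ρ : ℝ) {v : ℝ} (hv : v ≠ 0) :
    s * stdNormalPDF ((log (s / K) + ρ) / v + v / 2) =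
      K * exp (-ρ) * stdNormalPDF ((log (s / K) + ρ) / v - v / 2) := by
  rw [stdNormalPDF_add_half, div_mul_cancel₀ _ hv, neg_add, exp_add, exp_neg (log _),
    exp_log (div_pos hs hK), inv_div]
  field_simp

lemma hasDerivAt_bsPrice_vol (hs : 0 < s) (hK : 0 < K) (ρ : ℝ) {v : ℝ} (hv : v ≠ 0) :
    HasDerivAt (fun w => bsPrice s K w ρ)
      (s * stdNormalPDF ((log (s / K) + ρ) / v + v / 2)) v := by
  have key := mul_stdNormalPDF_add_half hs hK ρ hv
  set a := log (s / K) + ρ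
  have hd : HasDerivAt (fun w => a / w) (-(a / v ^ 2)) v := by
    simpa [div_eq_mul_inv] using (hasDerivAt_inv hv).const_mul a
  have hd₁ := (hasDerivAt_stdNormalCDF _).comp v (hd.add ((hasDerivAt_id v).div_const 2))
  have hd₂ := (hasDerivAt_stdNormalCDF _).comp v (hd.sub ((hasDerivAt_id v).div_const 2))
  refine ((hd₁.const_mul s).sub (hd₂.const_mul (K * exp (-ρ)))).congr_deriv ?_
  simp only [Pi.add_apply, Pi.sub_apply, id]
  rw [← mul_assoc (K * exp (-ρ)), ← key]
  ring

lemma strictMonoOn_bsPrice_vol (hs : 0 < s) (hK : 0 < K) (ρ : ℝ) :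
    StrictMonoOn (fun v => bsPrice s K v ρ) (Ioi 0) := by
  refine strictMonoOn_of_deriv_pos (convex_Ioi 0)
    (fun v hv => (hasDerivAt_bsPrice_vol hs hK ρ (ne_of_gt hv)).continuousAt.continuousWithinAt)
    fun v hv => ?_
  rw [interior_Ioi] at hv
  rw [(hasDerivAt_bsPrice_vol hs hK ρ (ne_of_gt hv)).deriv]
  exact mul_pos hs (stdNormalPDF_pos _)

lemma tendsto_bsPrice_vol_nhdsGT_zero {ρ : ℝ} (hotm : log (s / K) + ρ < 0) :
    Tendsto (fun v => bsPrice s K v ρ) (𝓝[>] 0) (𝓝 0) := by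
  have hd : Tendsto (fun v => (log (s / K) + ρ) / v) (𝓝[>] 0) atBot := by
    simpa only [div_eq_mul_inv] using tendsto_inv_nhdsGT_zero.const_mul_atTop_of_neg hotm
  have hv₀ : Tendsto (fun v : ℝ => v) (𝓝[>] 0) (𝓝 0) := nhdsWithin_le_nhds
  have hv : Tendsto (fun v : ℝ => v / 2) (𝓝[>] 0) (𝓝 0) := by simpa using hv₀.div_const 2
  have h₁ := tendsto_stdNormalCDF_atBot.comp (hd.atBot_add hv)
  have h₂ := tendsto_stdNormalCDF_atBot.comp (hd.atBot_add hv.neg)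
  simpa [bsPrice, sub_eq_add_neg] using
    (tendsto_const_nhds (x := s)).mul h₁ |>.sub ((tendsto_const_nhds (x := K * exp (-ρ))).mul h₂)

lemma bsPrice_pos (hs : 0 < s) (hK : 0 < K) {ρ v : ℝ} (hotm : log (s / K) + ρ < 0)
    (hv : 0 < v) : 0 < bsPrice s K v ρ :=
  (strictMonoOn_bsPrice_vol hs hK ρ).lt_of_tendsto_nhdsGT
    (tendsto_bsPrice_vol_nhdsGT_zero hotm) hv

lemma continuous_bsPrice_rate (s K v : ℝ) : Continuous fun ρ => bsPrice s K v ρ := by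
  unfold bsPrice; fun_prop

end Price

theorem implied_vol_times_sqrt_time_tendsto_zero_general
    (s K r : ℝ) (hs : 0 < s) (hsK : s < K)
    (δ : ℝ) (hδ : 0 < δ) (h : ℝ → ℝ) (hpos : ∀ τ ∈ Set.Ioo (0 : ℝ) δ, 0 < h τ)
    (u : ℝ)
    (hlim : Tendsto (fun τ => BSCall τ s (h τ) r K / τ) (𝓝[>] (0 : ℝ)) (𝓝 u)) :
    Tendsto (fun τ => h τ * Real.sqrt τ) (𝓝[>] (0 : ℝ)) (𝓝 0) := by
  have hK : 0 < K := hs.trans hsK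
  have hotm : log (s / K) + 0 < 0 := by
    rw [add_zero]; exact log_neg (div_pos hs hK) ((div_lt_one hK).2 hsK)
  have hτ : Tendsto (fun τ : ℝ => τ) (𝓝[>] 0) (𝓝 0) := nhdsWithin_le_nhds
  have hprice : Tendsto (fun τ => BSCall τ s (h τ) r K) (𝓝[>] 0) (𝓝 0) := by
    have hmul := hlim.mul hτ
    rw [mul_zero] at hmul
    exact hmul.congr' (eventually_mem_nhdsWithin.mono fun τ hτ₀ => div_mul_cancel₀ _ hτ₀.ne')
  have hvol_pos : ∀ᶠ τ in 𝓝[>] 0, 0 < h τ * √τ :=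
    eventually_of_mem (Ioo_mem_nhdsGT hδ) fun τ hτδ => mul_pos (hpos τ hτδ) (sqrt_pos.2 hτδ.1)
  refine tendsto_order.2 ⟨fun a ha => hvol_pos.mono fun τ hv => ha.trans hv, fun ε hε => ?_⟩
  have hc := bsPrice_pos hs hK hotm hε
  have hrate : ∀ᶠ τ in 𝓝[>] 0, bsPrice s K ε 0 / 2 < bsPrice s K ε (r * τ) := by
    have hrτ : Tendsto (fun τ => r * τ) (𝓝[>] 0) (𝓝 0) := by simpa using hτ.const_mul r
    exact ((continuous_bsPrice_rate s K ε).tendsto 0 |>.comp hrτ).eventually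
      (lt_mem_nhds (half_lt_self hc))
  filter_upwards [hvol_pos, hrate, hprice.eventually (gt_mem_nhds (half_pos hc))]
    with τ hv hρ hC
  rw [BSCall_eq_bsPrice] at hC
  exact (strictMonoOn_bsPrice_vol hs hK (r * τ)).lt_iff_lt hv hε |>.1 (hC.trans hρ)

/-- If the out-of-the-money call price behaves like `u·τ` as `τ → 0⁺`, then the
implied volatility satisfies `h(τ)√τ → 0`. -/
theorem implied_vol_times_sqrt_time_tendsto_zero
    (s K r : ℝ) (hs : 0 < s) (hsK : s < K) (hr : 0 ≤ r)
    (δ : ℝ) (hδ : 0 < δ) (h : ℝ → ℝ) (hpos : ∀ τ ∈ Set.Ioo (0 : ℝ) δ, 0 < h τ)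
    (u : ℝ) (hu : 0 < u)
    (hlim : Tendsto (fun τ => BSCall τ s (h τ) r K / τ) (𝓝[>] (0 : ℝ)) (𝓝 u)) :
    Tendsto (fun τ => h τ * Real.sqrt τ) (𝓝[>] (0 : ℝ)) (𝓝 0) :=
  implied_vol_times_sqrt_time_tendsto_zero_general s K r hs hsK δ hδ h hpos u hlim
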